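/- Let C_ℓ (ℓ even, ℓ ≥ 4) be an outer cycle of a connected bipartite cactus G with exit vertex x, and suppose all vertices of V(C_ℓ) \ {x} have degree 2 in G. Write C_ℓ = x, v₁, …, v_{ℓ−1}, x and let G' = G − {v₂, …, v_{ℓ−2}}. Then γ₂(G) ≤ γ₂(G') + (ℓ−4)/2 and a(G) ≥ a(G') + (ℓ−4)/2; hence γ₂(G') ≤ a(G') + 1 implies γ₂(G) ≤ a(G) + 1. -/

import Mathlib

open Classical Finset
noncomputable section

/-- `S` is a 2-dominating set of `G`: every vertex outside `S` has ≥ 2 neighbors in `S`. -/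
def IsTwoDomSet {V : Type*} [Fintype V] (G : SimpleGraph V) (S : Finset V) : Prop :=
  ∀ v, v ∉ S → 2 ≤ (G.neighborFinset v ∩ S).card

/-- The 2-domination number. -/
noncomputable def gamma2 {V : Type*} [Fintype V] (G : SimpleGraph V) : ℕ :=
  sInf {k | ∃ S : Finset V, IsTwoDomSet G S ∧ S.card = k}

/-- `S` is an annihilation set of `G`: the sum of degrees over `S` is at most `m(G)`. -/
def IsAnnSet {V : Type*} [Fintype V] (G : SimpleGraph V) (S : Finset V) : Prop :=
  ∑ v ∈ S, G.degree v ≤ G.edgeFinset.card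

/-- The annihilation number: the largest size of an annihilation set (equivalently, the
largest `k` such that the sum of the `k` smallest degrees is at most the edge count). -/
noncomputable def annihilation {V : Type*} [Fintype V] (G : SimpleGraph V) : ℕ :=
  sSup {k | ∃ S : Finset V, IsAnnSet G S ∧ S.card = k}

/-- A cactus: a connected graph whose cycles are pairwise edge-disjoint
(two cycles either have the same edge set or share no edge). -/
def IsCactus {V : Type*} (G : SimpleGraph V) : Prop :=
  G.Connected ∧ ∀ (u v : V) (p : G.Walk u u) (q : G.Walk v v),
    p.IsCycle → q.IsCycle →
      (p.edges.toFinset = q.edges.toFinset ∨ ∀ e ∈ p.edges, e ∉ q.edges)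

/-- The distance between two cycles (given as closed walks): the minimum distance
between a vertex of one and a vertex of the other. -/
noncomputable def cycDist {V : Type*} (G : SimpleGraph V) {u v : V}
    (c : G.Walk u u) (d : G.Walk v v) : ℕ :=
  sInf {n | ∃ y ∈ c.support, ∃ z ∈ d.support, G.dist y z = n}

/-- `x` is an exit vertex of the cycle `c`: it realizes the distance from `c`
to some other cycle of `G`. -/
def IsExit {V : Type*} (G : SimpleGraph V) {u : V} (c : G.Walk u u) (x : V) : Prop :=
  x ∈ c.support ∧ ∃ (w : V) (d : G.Walk w w), d.IsCycle ∧
    d.edges.toFinset ≠ c.edges.toFinset ∧ ∃ z ∈ d.support, G.dist x z = cycDist G c d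

/-- An outer cycle: a cycle with at most one exit vertex. -/
def IsOuterCycle {V : Type*} (G : SimpleGraph V) {u : V} (c : G.Walk u u) : Prop :=
  c.IsCycle ∧ ∀ x y, IsExit G c x → IsExit G c y → x = y

/-- There is a sun at the cycle `c`: at every vertex of `c` except one (the exit
vertex, if there is one) there is exactly one pendant vertex attached and no other
tree, i.e. the vertex has degree 3 and a unique leaf neighbor. -/
def HasSunAt {V : Type*} [Fintype V] (G : SimpleGraph V) {u : V} (c : G.Walk u u) : Prop :=
  ∃ x ∈ c.support, (∀ y, IsExit G c y → y = x) ∧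
    ∀ v ∈ c.support, v ≠ x →
      G.degree v = 3 ∧ ∃! w, G.Adj v w ∧ G.degree w = 1

/-- The interior vertices `v₂, …, v_{ℓ−2}` of a cycle `c = x, v₁, …, v_{ℓ−1}, x`. -/
def cycInterior {V : Type*} (G : SimpleGraph V) {x : V} (c : G.Walk x x) : Set V :=
  {y | ∃ i, 2 ≤ i ∧ i ≤ c.length - 2 ∧ y = c.getVert i}

/-!
Write `vᵢ = c.getVert i` and `I = {v₂, …, v_{ℓ−2}}`, so that `G' = G[Iᶜ]`. Every `vᵢ` with
`0 < i < ℓ` has degree 2, hence neighbourhood `{vᵢ₋₁, vᵢ₊₁}`.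

For `γ₂`: in `G'` the vertices `v₁` and `v_{ℓ−1}` have degree at most 1, so they lie in every
2-dominating set `S'` of `G'`; adding the odd vertices `v₃, v₅, …, v_{ℓ−3}` 2-dominates the even
interior vertices, since both their neighbours have odd index.

For `a`: the only edges between `I` and `Iᶜ` are `v₁v₂` and `v_{ℓ−2}v_{ℓ−1}`, so passing from `G'`
to `G` raises the degree sum of an annihilation set `T'` of `G'` by at most 2, while the edge
count grows by the `ℓ − 2` edges of the path `v₁ … v_{ℓ−1}`. This leaves room for the
`(ℓ − 4)/2` even interior vertices `v₂, v₄, …, v_{ℓ−4}` of degree 2.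
-/

open SimpleGraph

section Invariants

variable {V : Type*} [Fintype V] {G : SimpleGraph V}

theorem gamma2_le_card {S : Finset V} (hS : IsTwoDomSet G S) : gamma2 G ≤ #S :=
  Nat.sInf_le ⟨S, hS, rfl⟩

theorem exists_isTwoDomSet_card_eq_gamma2 (G : SimpleGraph V) :
    ∃ S : Finset V, IsTwoDomSet G S ∧ #S = gamma2 G :=
  Nat.sInf_mem (s := {k | ∃ S : Finset V, IsTwoDomSet G S ∧ #S = k})
    ⟨_, univ, fun v hv => absurd (mem_univ v) hv, rfl⟩

theorem IsTwoDomSet.mem_of_degree_lt_two {S : Finset V} (hS : IsTwoDomSet G S) {v : V}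
    (hv : G.degree v < 2) : v ∈ S := by
  by_contra hvS
  have := (hS v hvS).trans (card_le_card inter_subset_left)
  rw [card_neighborFinset_eq_degree] at this
  omega

theorem bddAbove_card_isAnnSet (G : SimpleGraph V) :
    BddAbove {k | ∃ S : Finset V, IsAnnSet G S ∧ #S = k} :=
  ⟨Fintype.card V, by rintro _ ⟨S, -, rfl⟩; exact card_le_univ S⟩

theorem card_le_annihilation {S : Finset V} (hS : IsAnnSet G S) : #S ≤ annihilation G :=
  le_csSup (bddAbove_card_isAnnSet G) ⟨S, hS, rfl⟩

theorem exists_isAnnSet_card_eq_annihilation (G : SimpleGraph V) :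
    ∃ S : Finset V, IsAnnSet G S ∧ #S = annihilation G :=
  Nat.sSup_mem (s := {k | ∃ S : Finset V, IsAnnSet G S ∧ #S = k})
    ⟨0, ∅, by simp [IsAnnSet], rfl⟩ (bddAbove_card_isAnnSet G)

end Invariants

section Induce

variable {V : Type*} [Fintype V] {G : SimpleGraph V} {s : Set V} [DecidablePred (· ∈ s)]

theorem degree_induce_add_card_filter_notMem (u : s) :
    (G.induce s).degree u + #{w ∈ G.neighborFinset u | w ∉ s} = G.degree u := by
  rw [← card_neighborFinset_eq_degree, ← card_map (.subtype (· ∈ s)),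
    map_neighborFinset_induce, ← card_neighborFinset_eq_degree,
    ← card_filter_add_card_filter_not (s := G.neighborFinset u) (· ∈ s)]
  congr 2
  ext
  simp

theorem degree_induce_lt_degree {u : s} {w : V} (huw : G.Adj u w) (hw : w ∉ s) :
    (G.induce s).degree u < G.degree u := by
  have hpos : 0 < #{w ∈ G.neighborFinset u | w ∉ s} := card_pos.mpr ⟨w, by simpa [huw]⟩
  have := degree_induce_add_card_filter_notMem (G := G) u
  omega

theorem card_edgeFinset_induce_add_card_le {F : Finset (Sym2 V)} (hF : F ⊆ G.edgeFinset)
    (hFs : ∀ e ∈ F, ∃ w ∈ e, w ∉ s) :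
    #(G.induce s).edgeFinset + #F ≤ #G.edgeFinset := by
  rw [← card_map (Function.Embedding.subtype (· ∈ s)).sym2Map, map_edgeFinset_induce,
    ← card_union_of_disjoint]
  · exact card_le_card (union_subset inter_subset_left hF)
  · refine disjoint_right.mpr fun e he he' => ?_
    obtain ⟨w, hwe, hws⟩ := hFs e he
    exact hws (by simpa using mem_sym2_iff.mp (mem_inter.mp he').2 w hwe)

theorem IsTwoDomSet.of_induce {S' : Finset s} (hS' : IsTwoDomSet (G.induce s) S')
    {S : Finset V} (hsub : S'.map (.subtype (· ∈ s)) ⊆ S)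
    (hout : ∀ v ∉ s, v ∉ S → 2 ≤ #(G.neighborFinset v ∩ S)) : IsTwoDomSet G S := by
  -- `IsTwoDomSet (G.induce s)` intersects finsets of `s` using classical equality
  let _ : DecidableEq s := fun a b => Classical.propDecidable (a = b)
  intro v hvS
  by_cases hvs : v ∈ s
  · have hvS' : (⟨v, hvs⟩ : s) ∉ S' := fun h => hvS (hsub (mem_map_of_mem _ h))
    refine (hS' _ hvS').trans (card_le_card_of_injOn Subtype.val (fun w hw => ?_)
      Subtype.val_injective.injOn)
    rw [mem_coe, mem_inter, mem_neighborFinset] at hw ⊢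
    exact ⟨hw.1, hsub (mem_map_of_mem _ hw.2)⟩
  · exact hout v hvs hvS

end Induce

namespace SimpleGraph.Walk.IsCycle

variable {V : Type*} {G : SimpleGraph V} {x : V} {c : G.Walk x x}

theorem getVert_mem_cycInterior_iff (hc : c.IsCycle) {i : ℕ} (hi : i < c.length) :
    c.getVert i ∈ cycInterior G c ↔ 2 ≤ i ∧ i ≤ c.length - 2 := by
  refine ⟨?_, fun h => ⟨i, h.1, h.2, rfl⟩⟩
  rintro ⟨j, hj, hj', hij⟩
  have := hc.getVert_injOn' (by simp only [Set.mem_ofPred_eq]; omega)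
    (by simp only [Set.mem_ofPred_eq]; omega) hij
  omega

theorem exists_adj_mem_cycInterior (hlen : 4 ≤ c.length) {i : ℕ}
    (hi : i = 1 ∨ i = c.length - 1) : ∃ w ∈ cycInterior G c, G.Adj (c.getVert i) w := by
  rcases hi with rfl | rfl
  · exact ⟨c.getVert 2, ⟨2, le_rfl, by omega, rfl⟩, c.adj_getVert_succ (by omega)⟩
  · refine ⟨c.getVert (c.length - 2), ⟨c.length - 2, by omega, le_rfl, rfl⟩, ?_⟩
    have := c.adj_getVert_succ (i := c.length - 2) (by omega)
    rwa [show c.length - 2 + 1 = c.length - 1 by omega, adj_comm] at this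

variable [Fintype V]

theorem degree_getVert (hc : c.IsCycle) (hdeg : ∀ y ∈ c.support, y ≠ x → G.degree y = 2)
    {i : ℕ} (hi : 0 < i) (hi' : i < c.length) : G.degree (c.getVert i) = 2 :=
  hdeg _ (c.getVert_mem_support i) (by rw [Ne, hc.getVert_endpoint_iff hi'.le]; omega)

theorem neighborFinset_getVert (hc : c.IsCycle)
    (hdeg : ∀ y ∈ c.support, y ≠ x → G.degree y = 2) {i : ℕ} (hi : 0 < i) (hi' : i < c.length) :
    G.neighborFinset (c.getVert i) = {c.getVert (i - 1), c.getVert (i + 1)} := by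
  have hsub : {c.getVert (i - 1), c.getVert (i + 1)} ⊆ G.neighborFinset (c.getVert i) := by
    intro w hw
    rw [mem_neighborFinset]
    rcases mem_insert.mp hw with rfl | hw
    · simpa [Nat.sub_add_cancel hi] using (c.adj_getVert_succ (i := i - 1) (by omega)).symm
    · rw [mem_singleton.mp hw]
      exact c.adj_getVert_succ hi'
  refine (eq_of_subset_of_card_le hsub ?_).symm
  rw [card_neighborFinset_eq_degree, hc.degree_getVert hdeg hi hi',
    card_pair (hc.getVert_sub_one_ne_getVert_add_one hi'.le)]

theorem eq_of_adj_of_notMem_cycInterior (hc : c.IsCycle)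
    (hdeg : ∀ y ∈ c.support, y ≠ x → G.degree y = 2)
    {u w : V} (hu : u ∉ cycInterior G c) (hw : w ∈ cycInterior G c) (hwu : G.Adj w u) :
    (u = c.getVert 1 ∧ w = c.getVert 2) ∨
      (u = c.getVert (c.length - 1) ∧ w = c.getVert (c.length - 2)) := by
  obtain ⟨i, hi, hi', rfl⟩ := hw
  have := hc.three_le_length
  have hu' : u ∈ G.neighborFinset (c.getVert i) := (mem_neighborFinset _ _ _).mpr hwu
  rw [hc.neighborFinset_getVert hdeg (by omega) (by omega), mem_insert, mem_singleton] at hu'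
  rcases hu' with rfl | rfl
  · rw [hc.getVert_mem_cycInterior_iff (by omega)] at hu
    obtain rfl : i = 2 := by omega
    exact Or.inl ⟨rfl, rfl⟩
  · rw [hc.getVert_mem_cycInterior_iff (by omega)] at hu
    obtain rfl : i = c.length - 2 := by omega
    exact Or.inr ⟨by congr 1; omega, rfl⟩

theorem sum_card_neighborFinset_filter_mem_cycInterior_le_two (hc : c.IsCycle)
    (hdeg : ∀ y ∈ c.support, y ≠ x → G.degree y = 2) {T : Finset V}
    (hT : ∀ u ∈ T, u ∉ cycInterior G c) :
    ∑ u ∈ T, #{w ∈ G.neighborFinset u | w ∈ cycInterior G c} ≤ 2 := by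
  rw [← card_sigma]
  refine (card_le_card (t := {⟨c.getVert 1, c.getVert 2⟩,
    ⟨c.getVert (c.length - 1), c.getVert (c.length - 2)⟩}) ?_).trans card_le_two
  rintro ⟨u, w⟩ h
  simp only [mem_sigma, mem_filter, mem_neighborFinset] at h
  rcases hc.eq_of_adj_of_notMem_cycInterior hdeg (hT u h.1) h.2.2 h.2.1.symm with
    ⟨rfl, rfl⟩ | ⟨rfl, rfl⟩ <;> simp

theorem card_edgeFinset_induce_compl_cycInterior_add_le (hc : c.IsCycle)
    (hlen : 4 ≤ c.length) :
    #(G.induce (cycInterior G c)ᶜ).edgeFinset + (c.length - 2) ≤ #G.edgeFinset := by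
  set F := (Icc 1 (c.length - 2)).image fun i => s(c.getVert i, c.getVert (i + 1))
  have hF : #F = c.length - 2 := by
    rw [card_image_of_injOn, Nat.card_Icc, Nat.add_sub_cancel]
    intro i hi j hj h
    simp only [coe_Icc, Set.mem_Icc] at hi hj
    have hinj := hc.getVert_injOn' (p := c)
    simp only [Set.InjOn, Set.mem_ofPred_eq] at hinj
    rcases Sym2.eq_iff.mp h with ⟨h, -⟩ | ⟨h, h'⟩
    · exact hinj (by omega) (by omega) h
    · have := hinj (by omega) (by omega) h
      have := hinj (by omega) (by omega) h'
      omega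
  have hFG : F ⊆ G.edgeFinset := by
    intro e he
    obtain ⟨i, hi, rfl⟩ := mem_image.mp he
    rw [mem_Icc] at hi
    exact mem_edgeFinset.mpr (c.adj_getVert_succ (by omega))
  have hFI : ∀ e ∈ F, ∃ w ∈ e, w ∉ (cycInterior G c)ᶜ := by
    intro e he
    obtain ⟨i, hi, rfl⟩ := mem_image.mp he
    rw [mem_Icc] at hi
    rcases eq_or_lt_of_le hi.1 with rfl | h
    · exact ⟨c.getVert 2, Sym2.mem_mk_right _ _, not_not.mpr ⟨2, le_rfl, by omega, rfl⟩⟩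
    · exact ⟨c.getVert i, Sym2.mem_mk_left _ _, not_not.mpr ⟨i, h, hi.2, rfl⟩⟩
  rw [← hF]
  exact card_edgeFinset_induce_add_card_le hFG hFI

theorem gamma2_le_gamma2_induce_compl_cycInterior_add (hc : c.IsCycle)
    (hdeg : ∀ y ∈ c.support, y ≠ x → G.degree y = 2) (heven : Even c.length)
    (hlen : 4 ≤ c.length) :
    gamma2 G ≤ gamma2 (G.induce (cycInterior G c)ᶜ) + (c.length - 4) / 2 := by
  obtain ⟨S', hS', hS'card⟩ := exists_isTwoDomSet_card_eq_gamma2 (G.induce (cycInterior G c)ᶜ)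
  set O := (range ((c.length - 4) / 2)).image fun k => c.getVert (2 * k + 3)
  set S := S'.map (Function.Embedding.subtype (· ∈ (cycInterior G c)ᶜ)) ∪ O
  have hend : ∀ i, (i = 1 ∨ i = c.length - 1) → c.getVert i ∈ S := by
    intro i hi
    have hiI : c.getVert i ∈ (cycInterior G c)ᶜ := by
      rw [Set.mem_compl_iff, hc.getVert_mem_cycInterior_iff (by omega)]
      omega
    obtain ⟨w, hwI, hiw⟩ := exists_adj_mem_cycInterior hlen hi
    have hlt := degree_induce_lt_degree (u := ⟨_, hiI⟩) hiw (not_not.mpr hwI)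
    rw [hc.degree_getVert hdeg (by omega) (by omega)] at hlt
    exact mem_union_left _ (mem_map_of_mem _ (hS'.mem_of_degree_lt_two hlt))
  have hodd : ∀ j, 0 < j → j < c.length → Odd j → c.getVert j ∈ S := by
    rintro j hj hj' ⟨k, rfl⟩
    by_cases hk : k = 0 ∨ 2 * k + 1 = c.length - 1
    · exact hend _ (by omega)
    · refine mem_union_right _ (mem_image.mpr ⟨k - 1, mem_range.mpr ?_, by congr 1; omega⟩)
      obtain ⟨m, hm⟩ := heven
      omega
  have hS : IsTwoDomSet G S := by
    refine hS'.of_induce subset_union_left fun v hv hvS => ?_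
    obtain ⟨i, hi, hi', rfl⟩ := not_not.mp hv
    rcases Nat.even_or_odd i with ⟨k, rfl⟩ | hi_odd
    · have hN := hc.neighborFinset_getVert hdeg (i := k + k) (by omega) (by omega)
      rw [inter_eq_left.mpr, card_neighborFinset_eq_degree,
        hc.degree_getVert hdeg (by omega) (by omega)]
      rw [hN, insert_subset_iff, singleton_subset_iff]
      exact ⟨hodd _ (by omega) (by omega) ⟨k - 1, by omega⟩,
        hodd _ (by omega) (by omega) ⟨k, by omega⟩⟩
    · exact absurd (hodd i (by omega) (by omega) hi_odd) hvS
  calc gamma2 G ≤ #S := gamma2_le_card hS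
    _ ≤ #S' + #O := (card_union_le _ _).trans_eq (by rw [card_map])
    _ ≤ gamma2 (G.induce (cycInterior G c)ᶜ) + (c.length - 4) / 2 := by
      rw [hS'card]
      exact Nat.add_le_add_left (card_image_le.trans_eq (card_range _)) _

theorem sum_degree_le_sum_degree_induce_compl_cycInterior_add_two (hc : c.IsCycle)
    (hdeg : ∀ y ∈ c.support, y ≠ x → G.degree y = 2) (T : Finset ↥(cycInterior G c)ᶜ) :
    ∑ u ∈ T, G.degree u ≤ ∑ u ∈ T, (G.induce (cycInterior G c)ᶜ).degree u + 2 := by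
  have hboundary := hc.sum_card_neighborFinset_filter_mem_cycInterior_le_two hdeg
    (T := T.map (Function.Embedding.subtype _)) fun v hv => by
      obtain ⟨u, -, rfl⟩ := mem_map.mp hv
      exact u.2
  rw [sum_map] at hboundary
  calc ∑ u ∈ T, G.degree u
      = ∑ u ∈ T, (G.induce (cycInterior G c)ᶜ).degree u +
          ∑ u ∈ T, #{w ∈ G.neighborFinset u | w ∉ (cycInterior G c)ᶜ} := by
        rw [← sum_add_distrib]
        exact sum_congr rfl fun u _ => (degree_induce_add_card_filter_notMem u).symm
    _ ≤ ∑ u ∈ T, (G.induce (cycInterior G c)ᶜ).degree u + 2 := by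
        refine Nat.add_le_add_left (le_of_eq_of_le ?_ hboundary) _
        simp only [Function.Embedding.subtype_apply, Set.notMem_compl_iff]
        congr!

theorem annihilation_induce_compl_cycInterior_add_le (hc : c.IsCycle)
    (hdeg : ∀ y ∈ c.support, y ≠ x → G.degree y = 2) (hlen : 4 ≤ c.length) :
    annihilation (G.induce (cycInterior G c)ᶜ) + (c.length - 4) / 2 ≤ annihilation G := by
  obtain ⟨T', hT', hT'card⟩ :=
    exists_isAnnSet_card_eq_annihilation (G.induce (cycInterior G c)ᶜ)
  set E := (range ((c.length - 4) / 2)).image fun k => c.getVert (2 * k + 2)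
  have hE : ∀ v ∈ E, v ∈ cycInterior G c ∧ G.degree v = 2 := by
    intro v hv
    obtain ⟨k, hk, rfl⟩ := mem_image.mp hv
    rw [mem_range] at hk
    exact ⟨⟨2 * k + 2, by omega, by omega, rfl⟩, hc.degree_getVert hdeg (by omega) (by omega)⟩
  have hEcard : #E = (c.length - 4) / 2 := by
    rw [card_image_of_injOn, card_range]
    intro k hk j hj h
    simp only [coe_range, Set.mem_Iio] at hk hj
    have := hc.getVert_injOn' (by simp only [Set.mem_ofPred_eq]; omega)
      (by simp only [Set.mem_ofPred_eq]; omega) h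
    omega
  set T := T'.map (Function.Embedding.subtype _) ∪ E
  have hdisj : Disjoint (T'.map (Function.Embedding.subtype _)) E :=
    Finset.disjoint_left.mpr fun v hv hvE => by
      obtain ⟨u, -, rfl⟩ := mem_map.mp hv
      exact u.2 (hE _ hvE).1
  have hT'deg : ∑ u ∈ T', G.degree u ≤ #(G.induce (cycInterior G c)ᶜ).edgeFinset + 2 :=
    (hc.sum_degree_le_sum_degree_induce_compl_cycInterior_add_two hdeg T').trans
      (Nat.add_le_add_right hT' 2)
  have hm := hc.card_edgeFinset_induce_compl_cycInterior_add_le (G := G) hlen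
  have hTann : IsAnnSet G T := by
    unfold IsAnnSet
    rw [sum_union hdisj, sum_map, sum_congr rfl fun v hv => (hE v hv).2, sum_const, hEcard,
      smul_eq_mul]
    calc _ ≤ #(G.induce (cycInterior G c)ᶜ).edgeFinset + 2 + (c.length - 4) / 2 * 2 :=
          Nat.add_le_add_right hT'deg _
      _ ≤ #G.edgeFinset := by omega
  calc annihilation (G.induce (cycInterior G c)ᶜ) + (c.length - 4) / 2 = #T := by
        rw [card_union_of_disjoint hdisj, card_map, hT'card, hEcard]
    _ ≤ annihilation G := card_le_annihilation hTann

end SimpleGraph.Walk.IsCycle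

theorem stmt15_general {V : Type*} [Fintype V] (G : SimpleGraph V)
    (x : V) (c : G.Walk x x) (houter : IsOuterCycle G c)
    (heven : Even c.length) (hlen : 4 ≤ c.length)
    (hdeg : ∀ y ∈ c.support, y ≠ x → G.degree y = 2) :
    gamma2 G ≤ gamma2 (G.induce (cycInterior G c)ᶜ) + (c.length - 4) / 2 ∧
    annihilation (G.induce (cycInterior G c)ᶜ) + (c.length - 4) / 2 ≤ annihilation G ∧
    (gamma2 (G.induce (cycInterior G c)ᶜ) ≤ annihilation (G.induce (cycInterior G c)ᶜ) + 1 →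
      gamma2 G ≤ annihilation G + 1) := by
  have hgamma := houter.1.gamma2_le_gamma2_induce_compl_cycInterior_add hdeg heven hlen
  have hann := houter.1.annihilation_induce_compl_cycInterior_add_le hdeg hlen
  exact ⟨hgamma, hann, fun h => by omega⟩

/-- Case 1 of the proof of Theorem 4.1: if all non-exit vertices of an outer cycle
`C_ℓ` (ℓ even, ℓ ≥ 4) of a connected bipartite cactus have degree 2, then deleting the
interior vertices `v₂, …, v_{ℓ−2}` drops `γ₂` by at most `(ℓ−4)/2` and `a` by at least
`(ℓ−4)/2`; hence `γ₂(G') ≤ a(G') + 1` implies `γ₂(G) ≤ a(G) + 1`. -/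
theorem stmt15 {V : Type*} [Fintype V] (G : SimpleGraph V)
    (hcac : IsCactus G) (hbip : G.Colorable 2)
    (x : V) (c : G.Walk x x) (houter : IsOuterCycle G c)
    (hexit : ∀ y, IsExit G c y → y = x)
    (heven : Even c.length) (hlen : 4 ≤ c.length)
    (hdeg : ∀ y ∈ c.support, y ≠ x → G.degree y = 2) :
    gamma2 G ≤ gamma2 (G.induce (cycInterior G c)ᶜ) + (c.length - 4) / 2 ∧
    annihilation (G.induce (cycInterior G c)ᶜ) + (c.length - 4) / 2 ≤ annihilation G ∧
    (gamma2 (G.induce (cycInterior G c)ᶜ) ≤ annihilation (G.induce (cycInterior G c)ᶜ) + 1 →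
      gamma2 G ≤ annihilation G + 1) :=
  stmt15_general G x c houter heven hlen hdeg
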